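/- Let A be an n×n complex matrix, let U be an n×k matrix with C = A U, suppose the n×(k+m+1) matrix [C V_{m+1}] has orthonormal columns (so C* C = I, V_{m+1}* V_{m+1} = I, and C* V_{m+1} = 0), let V_m be the first m columns of V_{m+1}, let H̄_m be an (m+1)×m matrix with (I − C C*) A V_m = V_{m+1} H̄_m, and set B_m = C* A V_m. Let x₀ ∈ ℂⁿ with r₀ = b − A x₀ = β V_{m+1} e₁ for some β ∈ ℂ. Then for every y ∈ ℂᵐ, b − A(x₀ − U B_m y + V_m y) = r₀ − V_{m+1} H̄_m y, and hence ‖b − A(x₀ − U B_m y + V_m y)‖₂ = ‖β e₁ − H̄_m y‖₂; thus the Recycled GMRES minimum residual corrections over the augmented space range(U) + range(V_m) are s_m = −U B_m y_m and t_m = V_m y_m with y_m minimizing ‖β e₁ − H̄_m y‖₂. -/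

import Mathlib

/-! The residual of the augmented correction `−U B_m y + V_m y` is `r₀ − V_{m+1} H̄_m y`,
because `A U = C` and the projected Arnoldi relation give `A V_m = C B_m + V_{m+1} H̄_m`, so the
two `C B_m y` terms cancel. Since `r₀ = V_{m+1} (β e₁)`, this residual is the image of
`β e₁ − H̄_m y` under `V_{m+1}`, which has orthonormal columns and hence preserves the 2-norm. -/

open Matrix

/-- Euclidean (2-) norm of a complex vector. -/
noncomputable def enorm {ι : Type*} [Fintype ι] (v : ι → ℂ) : ℝ :=
  ‖(WithLp.equiv 2 (ι → ℂ)).symm v‖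

section Isometry

variable {ι κ : Type*} [Fintype ι] [Fintype κ]

theorem enorm_eq_sqrt_re_star_dotProduct (v : ι → ℂ) : _root_.enorm v = √(star v ⬝ᵥ v).re := by
  rw [_root_.enorm, norm_eq_sqrt_re_inner (𝕜 := ℂ), EuclideanSpace.inner_eq_star_dotProduct,
    dotProduct_comm]
  rfl

theorem enorm_mulVec_of_conjTranspose_mul_self_eq_one [DecidableEq κ] {V : Matrix ι κ ℂ}
    (hV : Vᴴ * V = 1) (z : κ → ℂ) : _root_.enorm (V *ᵥ z) = _root_.enorm z := by
  rw [enorm_eq_sqrt_re_star_dotProduct, enorm_eq_sqrt_re_star_dotProduct, star_mulVec,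
    dotProduct_mulVec, vecMul_vecMul, hV, vecMul_one]

end Isometry

section Residual

variable {R ι κ μ : Type*} [Ring R] [Fintype ι] [Fintype κ]

theorem eq_mul_mul_add_of_one_sub_mul_mul_eq [DecidableEq ι] {C : Matrix ι κ R}
    {D : Matrix κ ι R} {X Y : Matrix ι μ R} (h : (1 - C * D) * X = Y) :
    X = C * (D * X) + Y := by
  rw [← h, Matrix.sub_mul, Matrix.one_mul, Matrix.mul_assoc, add_sub_cancel]

theorem sub_mulVec_augmented_correction [Fintype μ] {A : Matrix ι ι R} {U C : Matrix ι κ R}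
    {V : Matrix ι μ R} {B : Matrix κ μ R} {W : Matrix ι μ R} (hC : A * U = C)
    (hAV : A * V = C * B + W) (b x₀ : ι → R) (y : μ → R) :
    b - A *ᵥ (x₀ - U *ᵥ (B *ᵥ y) + V *ᵥ y) = (b - A *ᵥ x₀) - W *ᵥ y := by
  have hAUB : A *ᵥ (U *ᵥ (B *ᵥ y)) = C *ᵥ (B *ᵥ y) := by rw [mulVec_mulVec, hC]
  have hAVy : A *ᵥ (V *ᵥ y) = C *ᵥ (B *ᵥ y) + W *ᵥ y := by
    rw [mulVec_mulVec, hAV, add_mulVec, mulVec_mulVec]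
  rw [mulVec_add, mulVec_sub, hAUB, hAVy]
  abel

end Residual

theorem recycled_gmres_least_squares_general {n k m : ℕ}
    (A : Matrix (Fin n) (Fin n) ℂ)
    (U : Matrix (Fin n) (Fin k) ℂ)
    (C : Matrix (Fin n) (Fin k) ℂ)
    (hC : C = A * U)
    (V₁ : Matrix (Fin n) (Fin (m + 1)) ℂ)
    (hVorth : V₁ᴴ * V₁ = 1)
    (Vm : Matrix (Fin n) (Fin m) ℂ)
    (H : Matrix (Fin (m + 1)) (Fin m) ℂ)
    (hArnoldi : ((1 : Matrix (Fin n) (Fin n) ℂ) - C * Cᴴ) * (A * Vm) = V₁ * H)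
    (Bm : Matrix (Fin k) (Fin m) ℂ)
    (hB : Bm = Cᴴ * (A * Vm))
    (b x₀ r₀ : Fin n → ℂ) (β : ℂ)
    (hr₀ : r₀ = b - A.mulVec x₀)
    (hcol : r₀ = β • V₁.mulVec (Pi.single 0 1)) :
    ∀ y : Fin m → ℂ,
      b - A.mulVec (x₀ - U.mulVec (Bm.mulVec y) + Vm.mulVec y) =
          r₀ - (V₁ * H).mulVec y ∧
        _root_.enorm (b - A.mulVec (x₀ - U.mulVec (Bm.mulVec y) + Vm.mulVec y)) =
          _root_.enorm (β • (Pi.single 0 1 : Fin (m + 1) → ℂ) - H.mulVec y) := by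
  intro y
  have hAV : A * Vm = C * Bm + V₁ * H := hB ▸ eq_mul_mul_add_of_one_sub_mul_mul_eq hArnoldi
  have hres := hr₀ ▸ sub_mulVec_augmented_correction hC.symm hAV b x₀ y
  refine ⟨hres, ?_⟩
  have hV₁ : r₀ - (V₁ * H) *ᵥ y = V₁ *ᵥ (β • Pi.single 0 1 - H *ᵥ y) := by
    rw [hcol, mulVec_sub, mulVec_smul, mulVec_mulVec]
  rw [hres, hV₁, enorm_mulVec_of_conjTranspose_mul_self_eq_one hVorth]

/-- In the Recycled GMRES setting — `C = A U`, the concatenation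
`[C  V_{m+1}]` has orthonormal columns (so `C* C = I`, `V_{m+1}* V_{m+1} = I`,
`C* V_{m+1} = 0`), `(I − C C*) A V_m = V_{m+1} H̄_m`, `B_m = C* A V_m`, and
`r₀ = b − A x₀ = β V_{m+1} e₁` — for every `y ∈ ℂᵐ` we have
`b − A(x₀ − U B_m y + V_m y) = r₀ − V_{m+1} H̄_m y`, and hence
`‖b − A(x₀ − U B_m y + V_m y)‖₂ = ‖β e₁ − H̄_m y‖₂`; thus the minimum residual
corrections over the augmented space are `s_m = −U B_m y_m`, `t_m = V_m y_m`
with `y_m` minimizing `‖β e₁ − H̄_m y‖₂`. -/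
theorem recycled_gmres_least_squares {n k m : ℕ}
    (A : Matrix (Fin n) (Fin n) ℂ)
    (U : Matrix (Fin n) (Fin k) ℂ)
    (C : Matrix (Fin n) (Fin k) ℂ)
    (hC : C = A * U)
    (V₁ : Matrix (Fin n) (Fin (m + 1)) ℂ)
    (hCorth : Cᴴ * C = 1)
    (hVorth : V₁ᴴ * V₁ = 1)
    (hCV : Cᴴ * V₁ = 0)
    (Vm : Matrix (Fin n) (Fin m) ℂ)
    (hV : Vm = V₁.submatrix id Fin.castSucc)
    (H : Matrix (Fin (m + 1)) (Fin m) ℂ)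
    (hArnoldi : ((1 : Matrix (Fin n) (Fin n) ℂ) - C * Cᴴ) * (A * Vm) = V₁ * H)
    (Bm : Matrix (Fin k) (Fin m) ℂ)
    (hB : Bm = Cᴴ * (A * Vm))
    (b x₀ r₀ : Fin n → ℂ) (β : ℂ)
    (hr₀ : r₀ = b - A.mulVec x₀)
    (hcol : r₀ = β • V₁.mulVec (Pi.single 0 1)) :
    ∀ y : Fin m → ℂ,
      b - A.mulVec (x₀ - U.mulVec (Bm.mulVec y) + Vm.mulVec y) =
          r₀ - (V₁ * H).mulVec y ∧
        _root_.enorm (b - A.mulVec (x₀ - U.mulVec (Bm.mulVec y) + Vm.mulVec y)) =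
          _root_.enorm (β • (Pi.single 0 1 : Fin (m + 1) → ℂ) - H.mulVec y) :=
  recycled_gmres_least_squares_general A U C hC V₁ hVorth Vm H hArnoldi Bm hB b x₀ r₀ β hr₀ hcol
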